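/- For every integer k ≥ 3, the function Ϡ_k : (0,∞) → ℝ defined by Ϡ_k(ξ) = k sinh(2ξ) − e^{2ξ}(1 + e^{−2kξ}) satisfies: Ϡ_k(ξ) → −2 as ξ → 0⁺, Ϡ_k(ξ) → +∞ as ξ → +∞, Ϡ_k'(ξ) > 0 for every ξ > 0, and consequently Ϡ_k has exactly one zero in (0,∞). -/

import Mathlib

open Real Filter Topology

noncomputable section

/-- The frequency-`k` symbol `Ϡ_k(ξ) = k sinh(2ξ) − e^{2ξ}(1 + e^{−2kξ})` of the
linearized rotating-patch operator on the boundary of the Kirchhoff ellipse. -/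
def Sampi (k : ℕ) (ξ : ℝ) : ℝ :=
  (k : ℝ) * Real.sinh (2 * ξ) - Real.exp (2 * ξ) * (1 + Real.exp (-(2 * (k : ℝ) * ξ)))

lemma sampi_hasDerivAt (k : ℕ) (ξ : ℝ) :
    HasDerivAt (Sampi k)
      ((k : ℝ) * (Real.cosh (2 * ξ) * 2) -
        (Real.exp (2 * ξ) * 2 * (1 + Real.exp (-(2 * (k : ℝ) * ξ))) +
          Real.exp (2 * ξ) * (Real.exp (-(2 * (k : ℝ) * ξ)) * (-(2 * (k : ℝ)))))) ξ := by
  have hd : HasDerivAt (fun x : ℝ => 2 * x) 2 ξ := by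
    simpa using (hasDerivAt_id ξ).const_mul (2 : ℝ)
  have hd2 : HasDerivAt (fun x : ℝ => -(2 * (k : ℝ) * x)) (-(2 * (k : ℝ))) ξ := by
    simpa using ((hasDerivAt_id ξ).const_mul (2 * (k : ℝ))).fun_neg
  have h1 : HasDerivAt (fun x : ℝ => Real.sinh (2 * x)) (Real.cosh (2 * ξ) * 2) ξ :=
    (Real.hasDerivAt_sinh (2 * ξ)).comp ξ hd
  have h2 : HasDerivAt (fun x : ℝ => Real.exp (2 * x)) (Real.exp (2 * ξ) * 2) ξ :=
    (Real.hasDerivAt_exp (2 * ξ)).comp ξ hd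
  have h3 : HasDerivAt (fun x : ℝ => Real.exp (-(2 * (k : ℝ) * x)))
      (Real.exp (-(2 * (k : ℝ) * ξ)) * (-(2 * (k : ℝ)))) ξ :=
    (Real.hasDerivAt_exp _).comp ξ hd2
  have h4 : HasDerivAt (fun x : ℝ => 1 + Real.exp (-(2 * (k : ℝ) * x)))
      (Real.exp (-(2 * (k : ℝ) * ξ)) * (-(2 * (k : ℝ)))) ξ := by
    simpa using (hasDerivAt_const ξ (1 : ℝ)).fun_add h3
  have := (h1.const_mul (k : ℝ)).fun_sub (h2.fun_mul h4)
  exact this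

lemma sampi_deriv_pos (k : ℕ) (hk : 3 ≤ k) (ξ : ℝ) (_hξ : 0 ≤ ξ) :
    0 < (k : ℝ) * (Real.cosh (2 * ξ) * 2) -
        (Real.exp (2 * ξ) * 2 * (1 + Real.exp (-(2 * (k : ℝ) * ξ))) +
          Real.exp (2 * ξ) * (Real.exp (-(2 * (k : ℝ) * ξ)) * (-(2 * (k : ℝ))))) := by
  have hk' : (3 : ℝ) ≤ (k : ℝ) := by exact_mod_cast hk
  have hc : Real.cosh (2 * ξ) = (Real.exp (2 * ξ) + Real.exp (-(2 * ξ))) / 2 := by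
    rw [Real.cosh_eq]
  have he1 := Real.exp_pos (2 * ξ)
  have he2 := Real.exp_pos (-(2 * ξ))
  have hE := Real.exp_pos (-(2 * (k : ℝ) * ξ))
  nlinarith [mul_pos he1 hE, mul_nonneg (by linarith : (0:ℝ) ≤ (k:ℝ) - 3) he1.le,
    mul_nonneg (by linarith : (0:ℝ) ≤ (k:ℝ)) he2.le,
    mul_nonneg (mul_nonneg (by linarith : (0:ℝ) ≤ (k:ℝ) - 3) he1.le) hE.le]

lemma sampi_continuous (k : ℕ) : Continuous (Sampi k) := by
  unfold Sampi
  fun_prop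

/-- For every integer `k ≥ 3`, `Ϡ_k` tends to `−2` at `0⁺`, tends to `+∞` at
`+∞`, has positive derivative on `(0, ∞)`, and consequently has exactly one
zero in `(0, ∞)`. -/
theorem sampi_k_has_unique_zero (k : ℕ) (hk : 3 ≤ k) :
    Tendsto (Sampi k) (nhdsWithin 0 (Set.Ioi 0)) (nhds (-2)) ∧
    Tendsto (Sampi k) atTop atTop ∧
    (∀ ξ : ℝ, 0 < ξ → ∃ d : ℝ, 0 < d ∧ HasDerivAt (Sampi k) d ξ) ∧
    (∃! ξ : ℝ, 0 < ξ ∧ Sampi k ξ = 0) := by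
  have hk' : (3 : ℝ) ≤ (k : ℝ) := by exact_mod_cast hk
  have hzero : Sampi k 0 = -2 := by norm_num [Sampi]
  have hcont := sampi_continuous k
  -- limit at 0⁺
  have h0 : Tendsto (Sampi k) (nhdsWithin 0 (Set.Ioi 0)) (nhds (-2)) := by
    have := hcont.tendsto 0
    rw [hzero] at this
    exact this.mono_left nhdsWithin_le_nhds
  -- limit at ∞
  have hTop : Tendsto (Sampi k) atTop atTop := by
    have hbase : Tendsto (fun ξ : ℝ => ((k : ℝ) / 2 - 1) * Real.exp (2 * ξ) - ((k : ℝ) / 2 + 1))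
        atTop atTop := by
      apply tendsto_atTop_add_const_right
      apply Tendsto.const_mul_atTop (by linarith : (0:ℝ) < (k : ℝ) / 2 - 1)
      exact Real.tendsto_exp_atTop.comp (tendsto_id.const_mul_atTop two_pos)
    apply tendsto_atTop_mono' _ _ hbase
    filter_upwards [eventually_ge_atTop (0 : ℝ)] with ξ hξ
    have hs : Real.sinh (2 * ξ) = (Real.exp (2 * ξ) - Real.exp (-(2 * ξ))) / 2 := by
      rw [Real.sinh_eq]
    have he2 : Real.exp (-(2 * ξ)) ≤ 1 := Real.exp_le_one_iff.mpr (by linarith)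
    have hE : Real.exp (2 * ξ) * Real.exp (-(2 * (k : ℝ) * ξ)) ≤ 1 := by
      rw [← Real.exp_add]
      apply Real.exp_le_one_iff.mpr
      nlinarith
    have he2' := Real.exp_pos (-(2 * ξ))
    simp only [Sampi]
    nlinarith
  -- derivative positive
  have hderiv : ∀ ξ : ℝ, 0 < ξ → ∃ d : ℝ, 0 < d ∧ HasDerivAt (Sampi k) d ξ := fun ξ hξ =>
    ⟨_, sampi_deriv_pos k hk ξ hξ.le, sampi_hasDerivAt k ξ⟩
  refine ⟨h0, hTop, hderiv, ?_⟩
  -- strict mono on Ici 0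
  have hmono : StrictMonoOn (Sampi k) (Set.Ici 0) := by
    apply strictMonoOn_of_deriv_pos (convex_Ici 0) hcont.continuousOn
    intro x hx
    rw [interior_Ici] at hx
    rw [(sampi_hasDerivAt k x).deriv]
    exact sampi_deriv_pos k hk x hx.le
  -- existence of a zero
  obtain ⟨b, hb⟩ := ((hTop.eventually_gt_atTop 0).and (eventually_gt_atTop (0 : ℝ))).exists
  obtain ⟨hbval, hbpos⟩ := hb
  have hIVT := intermediate_value_Ioo hbpos.le hcont.continuousOn
  have h0mem : (0 : ℝ) ∈ Set.Ioo (Sampi k 0) (Sampi k b) := by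
    rw [hzero]; exact ⟨by norm_num, hbval⟩
  obtain ⟨ξ, hξmem, hξval⟩ := hIVT h0mem
  refine ⟨ξ, ⟨hξmem.1, hξval⟩, ?_⟩
  rintro y ⟨hy, hyval⟩
  exact hmono.injOn hy.le hξmem.1.le (by rw [hyval, hξval])
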